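/- arXiv:2212.02658 — 4 statements merged into one kernel-verified Lean document; each statement's English description precedes it below -/
import Mathlib

section
/- Suppose r₁ > 0, r₂ > 0, c < r₁ and c ≤ r₂. Then the denominator r₁ + r₂ − 2c is strictly positive, the weight ω* := (r₁ − c)/(r₁ + r₂ − 2c) lies in the half-open interval (0, 1], and ω* minimizes R over [0,1]: for every ω ∈ [0,1], R(ω*) ≤ R(ω), with equality only if ω = ω*. -/
/-! Expanding the square, `R ω = r₁ - 2ω(r₁ - c) + (r₁ + r₂ - 2c) ω²`, so completing the square
gives `R ω - R ω* = (r₁ + r₂ - 2c)(ω - ω*)²`. The hypotheses `c < r₁` and `c ≤ r₂` make the leading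
coefficient positive and place `ω*` in `(0, 1]`. -/

def pooledRisk (r₁ r₂ c ω : ℝ) : ℝ :=
  (1 - ω) ^ 2 * r₁ + ω ^ 2 * r₂ + 2 * ω * (1 - ω) * c

section

variable {r₁ r₂ c : ℝ}

lemma pooledRisk_sub_pooledRisk {w : ℝ} (hw : w * (r₁ + r₂ - 2 * c) = r₁ - c) (ω : ℝ) :
    pooledRisk r₁ r₂ c ω - pooledRisk r₁ r₂ c w = (r₁ + r₂ - 2 * c) * (ω - w) ^ 2 := by
  unfold pooledRisk
  linear_combination 2 * (ω - w) * hw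

lemma pooledRisk_lt_pooledRisk {w ω : ℝ} (hD : 0 < r₁ + r₂ - 2 * c)
    (hw : w * (r₁ + r₂ - 2 * c) = r₁ - c) (hne : ω ≠ w) :
    pooledRisk r₁ r₂ c w < pooledRisk r₁ r₂ c ω := by
  rw [← sub_pos, pooledRisk_sub_pooledRisk hw]
  exact mul_pos hD (sq_pos_of_ne_zero (sub_ne_zero.mpr hne))

end

theorem pooled_risk_optimal_weight_interior_general
    (r₁ r₂ c : ℝ) (hc₁ : c < r₁) (hc₂ : c ≤ r₂)
    (R : ℝ → ℝ) (hR : ∀ ω, R ω = (1 - ω) ^ 2 * r₁ + ω ^ 2 * r₂ + 2 * ω * (1 - ω) * c)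
    (ωstar : ℝ) (hωstar : ωstar = (r₁ - c) / (r₁ + r₂ - 2 * c)) :
    0 < r₁ + r₂ - 2 * c ∧ 0 < ωstar ∧ ωstar ≤ 1 ∧
      ∀ ω ∈ Set.Icc (0 : ℝ) 1, R ωstar ≤ R ω ∧ (R ωstar = R ω → ω = ωstar) := by
  have hD : 0 < r₁ + r₂ - 2 * c := by linarith
  have hw : ωstar * (r₁ + r₂ - 2 * c) = r₁ - c := by
    rw [hωstar, div_mul_cancel₀ _ hD.ne']
  obtain rfl : R = pooledRisk r₁ r₂ c := funext hR
  have hpos : 0 < ωstar := hωstar ▸ div_pos (sub_pos.mpr hc₁) hD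
  have hle : ωstar ≤ 1 := hωstar ▸ (div_le_one hD).mpr (by linarith)
  refine ⟨hD, hpos, hle, fun ω _ => ⟨?_, fun heq => ?_⟩⟩
  · rcases eq_or_ne ω ωstar with rfl | hne
    · rfl
    · exact (pooledRisk_lt_pooledRisk hD hw hne).le
  · by_contra hne
    exact (pooledRisk_lt_pooledRisk hD hw hne).ne heq

/-- Lemma 1 (optimal pooling weight), interior case: if `r₁ > 0`, `r₂ > 0`, `c < r₁` and
`c ≤ r₂`, then the denominator `r₁ + r₂ - 2c` is strictly positive, the weight
`ω* = (r₁ - c)/(r₁ + r₂ - 2c)` lies in `(0, 1]`, and `ω*` minimizes the pooled asymptotic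
risk `R(ω) = (1-ω)²r₁ + ω²r₂ + 2ω(1-ω)c` over `[0,1]`, uniquely so. -/
theorem pooled_risk_optimal_weight_interior
    (r₁ r₂ c : ℝ) (hr₁ : 0 < r₁) (hr₂ : 0 < r₂) (hc₁ : c < r₁) (hc₂ : c ≤ r₂)
    (R : ℝ → ℝ) (hR : ∀ ω, R ω = (1 - ω) ^ 2 * r₁ + ω ^ 2 * r₂ + 2 * ω * (1 - ω) * c)
    (ωstar : ℝ) (hωstar : ωstar = (r₁ - c) / (r₁ + r₂ - 2 * c)) :
    0 < r₁ + r₂ - 2 * c ∧ 0 < ωstar ∧ ωstar ≤ 1 ∧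
      ∀ ω ∈ Set.Icc (0 : ℝ) 1, R ωstar ≤ R ω ∧ (R ωstar = R ω → ω = ωstar) :=
  pooled_risk_optimal_weight_interior_general r₁ r₂ c hc₁ hc₂ R hR ωstar hωstar
end

section
/- Suppose r₁ > 0, r₂ > 0, c < r₁ and c ≤ r₂, and set ω* := (r₁ − c)/(r₁ + r₂ − 2c). Then R(ω*) = (r₁·r₂ − c²)/(r₁ + r₂ − 2c), and R(ω*) ≤ min(r₁, r₂); in particular r₁ − R(ω*) = (r₁ − c)²/(r₁ + r₂ − 2c) and r₂ − R(ω*) = (r₂ − c)²/(r₁ + r₂ − 2c), so the optimally pooled risk never exceeds either individual risk. -/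
/-!
Completing the square: with `d = r₁ + r₂ - 2c` and `ω* = (r₁ - c)/d`, the risk is
`R(ω) = (r₁r₂ - c²)/d + d (ω - ω*)²`. For `d > 0` the weight `ω*` therefore minimises `R`, so
`R(ω*) ≤ R(0) = r₁` and `R(ω*) ≤ R(1) = r₂`, and the gaps are `d ω*²` and `d (1 - ω*)²`.
-/

noncomputable section

namespace PooledRisk

def risk (r₁ r₂ c ω : ℝ) : ℝ := (1 - ω) ^ 2 * r₁ + ω ^ 2 * r₂ + 2 * ω * (1 - ω) * c

def optimalWeight (r₁ r₂ c : ℝ) : ℝ := (r₁ - c) / (r₁ + r₂ - 2 * c)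

variable {r₁ r₂ c : ℝ}

@[simp] lemma risk_zero : risk r₁ r₂ c 0 = r₁ := by simp [risk]

@[simp] lemma risk_one : risk r₁ r₂ c 1 = r₂ := by simp [risk]

lemma one_sub_optimalWeight (hd : r₁ + r₂ - 2 * c ≠ 0) :
    1 - optimalWeight r₁ r₂ c = (r₂ - c) / (r₁ + r₂ - 2 * c) := by
  rw [optimalWeight, one_sub_div hd]; ring_nf

lemma risk_eq_add_sq (hd : r₁ + r₂ - 2 * c ≠ 0) (ω : ℝ) :
    risk r₁ r₂ c ω = (r₁ * r₂ - c ^ 2) / (r₁ + r₂ - 2 * c)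
      + (r₁ + r₂ - 2 * c) * (ω - optimalWeight r₁ r₂ c) ^ 2 := by
  rw [risk, optimalWeight]; field_simp; ring

lemma risk_optimalWeight (hd : r₁ + r₂ - 2 * c ≠ 0) :
    risk r₁ r₂ c (optimalWeight r₁ r₂ c) = (r₁ * r₂ - c ^ 2) / (r₁ + r₂ - 2 * c) := by
  simp [risk_eq_add_sq hd]

lemma risk_sub_risk_optimalWeight (hd : r₁ + r₂ - 2 * c ≠ 0) (ω : ℝ) :
    risk r₁ r₂ c ω - risk r₁ r₂ c (optimalWeight r₁ r₂ c)
      = (r₁ + r₂ - 2 * c) * (ω - optimalWeight r₁ r₂ c) ^ 2 := by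
  rw [risk_eq_add_sq hd ω, risk_optimalWeight hd]; ring

lemma risk_optimalWeight_le (hd : 0 < r₁ + r₂ - 2 * c) (ω : ℝ) :
    risk r₁ r₂ c (optimalWeight r₁ r₂ c) ≤ risk r₁ r₂ c ω := by
  rw [← sub_nonneg, risk_sub_risk_optimalWeight hd.ne']
  positivity

lemma sub_risk_optimalWeight_left (hd : r₁ + r₂ - 2 * c ≠ 0) :
    r₁ - risk r₁ r₂ c (optimalWeight r₁ r₂ c) = (r₁ - c) ^ 2 / (r₁ + r₂ - 2 * c) := by
  have gap := risk_sub_risk_optimalWeight hd 0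
  rw [risk_zero] at gap
  rw [gap, zero_sub, neg_sq, optimalWeight]
  field_simp

lemma sub_risk_optimalWeight_right (hd : r₁ + r₂ - 2 * c ≠ 0) :
    r₂ - risk r₁ r₂ c (optimalWeight r₁ r₂ c) = (r₂ - c) ^ 2 / (r₁ + r₂ - 2 * c) := by
  have gap := risk_sub_risk_optimalWeight hd 1
  rw [risk_one] at gap
  rw [gap, one_sub_optimalWeight hd]
  field_simp

end PooledRisk

end

open PooledRisk in
theorem pooled_risk_at_optimal_weight_general
    (r₁ r₂ c : ℝ) (hc₁ : c < r₁) (hc₂ : c ≤ r₂)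
    (R : ℝ → ℝ) (hR : ∀ ω, R ω = (1 - ω) ^ 2 * r₁ + ω ^ 2 * r₂ + 2 * ω * (1 - ω) * c)
    (ωstar : ℝ) (hωstar : ωstar = (r₁ - c) / (r₁ + r₂ - 2 * c)) :
    R ωstar = (r₁ * r₂ - c ^ 2) / (r₁ + r₂ - 2 * c) ∧
    r₁ - R ωstar = (r₁ - c) ^ 2 / (r₁ + r₂ - 2 * c) ∧
    r₂ - R ωstar = (r₂ - c) ^ 2 / (r₁ + r₂ - 2 * c) ∧
    R ωstar ≤ min r₁ r₂ := by
  obtain rfl : R = risk r₁ r₂ c := funext hR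
  obtain rfl : ωstar = optimalWeight r₁ r₂ c := hωstar
  have hd : 0 < r₁ + r₂ - 2 * c := by linarith
  refine ⟨risk_optimalWeight hd.ne', sub_risk_optimalWeight_left hd.ne',
    sub_risk_optimalWeight_right hd.ne', le_min ?_ ?_⟩
  · simpa using risk_optimalWeight_le hd 0
  · simpa using risk_optimalWeight_le hd 1

/-- The optimally pooled risk never exceeds either individual risk: for `r₁ > 0`, `r₂ > 0`,
`c < r₁`, `c ≤ r₂` and `ω* = (r₁ - c)/(r₁ + r₂ - 2c)`, one has
`R(ω*) = (r₁r₂ - c²)/(r₁ + r₂ - 2c)`, `R(ω*) ≤ min(r₁, r₂)`, and the exact gap identities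
`r₁ - R(ω*) = (r₁ - c)²/(r₁ + r₂ - 2c)` and `r₂ - R(ω*) = (r₂ - c)²/(r₁ + r₂ - 2c)`. -/
theorem pooled_risk_at_optimal_weight
    (r₁ r₂ c : ℝ) (hr₁ : 0 < r₁) (hr₂ : 0 < r₂) (hc₁ : c < r₁) (hc₂ : c ≤ r₂)
    (R : ℝ → ℝ) (hR : ∀ ω, R ω = (1 - ω) ^ 2 * r₁ + ω ^ 2 * r₂ + 2 * ω * (1 - ω) * c)
    (ωstar : ℝ) (hωstar : ωstar = (r₁ - c) / (r₁ + r₂ - 2 * c)) :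
    R ωstar = (r₁ * r₂ - c ^ 2) / (r₁ + r₂ - 2 * c) ∧
    r₁ - R ωstar = (r₁ - c) ^ 2 / (r₁ + r₂ - 2 * c) ∧
    r₂ - R ωstar = (r₂ - c) ^ 2 / (r₁ + r₂ - 2 * c) ∧
    R ωstar ≤ min r₁ r₂ :=
  pooled_risk_at_optimal_weight_general r₁ r₂ c hc₁ hc₂ R hR ωstar hωstar
end

section
/- Suppose r₁ > 0, r₂ > 0 and c ≤ (1/2)·min(r₁, r₂), and set ω₀ := r₁/(r₁ + r₂). Then R(ω₀) ≤ min(r₁, r₂): the pooled risk evaluated at the covariance-free weight ω₀ is no larger than either individual risk. -/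
/-- Lemma 2: if `r₁ > 0`, `r₂ > 0` and `c ≤ (1/2)·min(r₁, r₂)`, then the pooled risk
`R(ω) = (1-ω)²r₁ + ω²r₂ + 2ω(1-ω)c` evaluated at the covariance-free weight
`ω₀ = r₁/(r₁ + r₂)` is no larger than either individual risk. -/
theorem pooled_risk_naive_weight_dominates
    (r₁ r₂ c : ℝ) (hr₁ : 0 < r₁) (hr₂ : 0 < r₂) (hc : c ≤ (1 / 2) * min r₁ r₂)
    (R : ℝ → ℝ) (hR : ∀ ω, R ω = (1 - ω) ^ 2 * r₁ + ω ^ 2 * r₂ + 2 * ω * (1 - ω) * c)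
    (ω₀ : ℝ) (hω₀ : ω₀ = r₁ / (r₁ + r₂)) :
    R ω₀ ≤ min r₁ r₂ := by
  have hs : (0:ℝ) < r₁ + r₂ := by linarith
  have hs' : r₁ + r₂ ≠ 0 := ne_of_gt hs
  have key : R ω₀ = r₁ * r₂ * (r₁ + r₂ + 2 * c) / (r₁ + r₂) ^ 2 := by
    rw [hR, hω₀]; field_simp; ring
  rw [key]
  rcases le_total r₁ r₂ with h | h
  · rw [min_eq_left h] at hc ⊢
    rw [div_le_iff₀ (by positivity : (0:ℝ) < (r₁+r₂)^2)]
    nlinarith [mul_pos hr₁ hr₂, sq_nonneg r₁]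
  · rw [min_eq_right h] at hc ⊢
    rw [div_le_iff₀ (by positivity : (0:ℝ) < (r₁+r₂)^2)]
    nlinarith [mul_pos hr₁ hr₂, sq_nonneg r₂]
end

section
/- For each n ∈ ℕ let (Ωₙ, Pₙ) be a probability space carrying random vectors θ̄₁ₙ, θ̄₂ₙ : Ωₙ → ℝ^d and random d×d matrices Σ̄₁ₙ, Σ̄₂ₙ, H̄ₙ, and define the random pooling weight ω̃ₙ := tr(H̄ₙΣ̄₁ₙ) / ( (θ̄₁ₙ − θ̄₂ₙ)ᵀ H̄ₙ (θ̄₁ₙ − θ̄₂ₙ) + tr(H̄ₙΣ̄₁ₙ) + tr(H̄ₙΣ̄₂ₙ) ). Assume: (i) θ̄₁ₙ → θ₀ in probability and θ̄₂ₙ → θ* in probability, i.e. for every ε > 0, Pₙ(‖θ̄₁ₙ − θ₀‖ > ε) → 0 and Pₙ(‖θ̄₂ₙ − θ*‖ > ε) → 0; (ii) the rescaled covariance estimates n·Σ̄₁ₙ and n·Σ̄₂ₙ converge in probability (entrywise) to fixed matrices Σ₁ and Σ₂; (iii) H̄ₙ converges in probability (entrywise) to a fixed symmetric matrix H₀ with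 (θ* − θ₀)ᵀH₀(θ* − θ₀) > 0. Then ω̃ₙ → 0 in probability: for every ε > 0, Pₙ(|ω̃ₙ| > ε) → 0 as n → ∞. -/
/-!
Convergence in probability to a constant is preserved under pairing and under maps that are
continuous at the limit. Since `n • Σ̄ⱼ` converges, `Σ̄ⱼ → 0`, so `(θ̄₁, θ̄₂, H̄, Σ̄₁, Σ̄₂)`
converges jointly to `(θ₀, θ*, H₀, 0, 0)`. There the denominator of the pooling weight is
`(θ* - θ₀)ᵀ H₀ (θ* - θ₀) > 0`, so the weight is continuous at that point, where it equals `0`.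
-/

open MeasureTheory Matrix Filter Topology

section ConvergenceInProbability

variable {Ω : ℕ → Type*} [∀ n, MeasurableSpace (Ω n)] {P : ∀ n, Measure (Ω n)}

def TendstoInProbability {E : Type*} [TopologicalSpace E] (P : ∀ n, Measure (Ω n))
    (X : ∀ n, Ω n → E) (c : E) : Prop :=
  ∀ U ∈ 𝓝 c, Tendsto (fun n => P n {a | X n a ∉ U}) atTop (𝓝 0)

namespace TendstoInProbability

variable {E F : Type*} [TopologicalSpace E] [TopologicalSpace F]

lemma congr' {X Y : ∀ n, Ω n → E} {c : E} (hX : TendstoInProbability P X c)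
    (hXY : ∀ᶠ n in atTop, ∀ a, X n a = Y n a) : TendstoInProbability P Y c := by
  intro U hU
  refine (hX U hU).congr' ?_
  filter_upwards [hXY] with n hn
  simp only [hn]

lemma of_tendsto {x : ℕ → E} {c : E} (hx : Tendsto x atTop (𝓝 c)) :
    TendstoInProbability P (fun n _ => x n) c := by
  intro U hU
  refine tendsto_const_nhds.congr' ?_
  filter_upwards [hx hU] with n (hn : x n ∈ U)
  simp [hn]

lemma comp_continuousAt {X : ∀ n, Ω n → E} {c : E} {f : E → F}
    (hX : TendstoInProbability P X c) (hf : ContinuousAt f c) :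
    TendstoInProbability P (fun n a => f (X n a)) (f c) :=
  fun _ hV => hX _ (hf hV)

lemma prodMk {X : ∀ n, Ω n → E} {Y : ∀ n, Ω n → F} {c : E} {c' : F}
    (hX : TendstoInProbability P X c) (hY : TendstoInProbability P Y c') :
    TendstoInProbability P (fun n a => (X n a, Y n a)) (c, c') := by
  intro W hW
  obtain ⟨U, hU, V, hV, hUV⟩ := mem_nhds_prod_iff.1 hW
  have hsub : ∀ n, {a | (X n a, Y n a) ∉ W} ⊆ {a | X n a ∉ U} ∪ {a | Y n a ∉ V} :=
    fun n a ha => by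
      by_contra h
      simp only [Set.mem_union, Set.mem_ofPred_eq, not_or, not_not] at h
      exact ha (hUV ⟨h.1, h.2⟩)
  exact tendsto_nhds_bot_mono' (by simpa using (hX U hU).add (hY V hV))
    fun n => (measure_mono (hsub n)).trans (measure_union_le _ _)

lemma pi {ι : Type*} {E : ι → Type*} [∀ i, TopologicalSpace (E i)] {X : ∀ n, Ω n → ∀ i, E i}
    {c : ∀ i, E i} (hX : ∀ i, TendstoInProbability P (fun n a => X n a i) (c i)) :
    TendstoInProbability P X c := by
  intro U hU
  rw [nhds_pi, Filter.mem_pi'] at hU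
  obtain ⟨I, t, ht, hIU⟩ := hU
  have hsub : ∀ n, {a | X n a ∉ U} ⊆ ⋃ i ∈ I, {a | X n a i ∉ t i} := fun n a ha => by
    by_contra h
    simp only [Set.mem_iUnion, Set.mem_ofPred_eq, not_exists, not_not] at h
    exact ha (hIU fun i hi => h i hi)
  exact tendsto_nhds_bot_mono' (by simpa using tendsto_finsetSum I fun i _ => hX i (t i) (ht i))
    fun n => (measure_mono (hsub n)).trans (measure_biUnion_finset_le I _)

lemma matrix {m n R : Type*} [TopologicalSpace R] {X : ∀ k, Ω k → Matrix m n R}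
    {c : Matrix m n R} (hX : ∀ i j, TendstoInProbability P (fun k a => X k a i j) (c i j)) :
    TendstoInProbability P X c :=
  pi fun i => pi fun j => hX i j

lemma of_natCast_smul [AddCommMonoid E] [Module ℝ E] [ContinuousSMul ℝ E] {X : ∀ n, Ω n → E} {c : E}
    (hX : TendstoInProbability P (fun n a => (n : ℝ) • X n a) c) :
    TendstoInProbability P X 0 := by
  have hinv : TendstoInProbability P (fun n (_ : Ω n) => (n : ℝ)⁻¹) 0 :=
    .of_tendsto tendsto_inv_atTop_nhds_zero_nat
  have h := (hinv.prodMk hX).comp_continuousAt (f := fun p : ℝ × E => p.1 • p.2)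
    continuous_smul.continuousAt
  rw [zero_smul] at h
  refine h.congr' ?_
  filter_upwards [eventually_ne_atTop 0] with n hn a
  simp [smul_smul, hn]

end TendstoInProbability

lemma tendstoInProbability_iff_dist {E : Type*} [PseudoMetricSpace E] {X : ∀ n, Ω n → E}
    {c : E} : TendstoInProbability P X c ↔
      ∀ ε : ℝ, 0 < ε → Tendsto (fun n => P n {a | ε < dist (X n a) c}) atTop (𝓝 0) := by
  refine ⟨fun hX ε hε => ?_, fun hX U hU => ?_⟩
  · simpa [Metric.mem_closedBall] using hX _ (Metric.closedBall_mem_nhds c hε)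
  · obtain ⟨ε, hε, hεU⟩ := Metric.mem_nhds_iff.1 hU
    refine tendsto_nhds_bot_mono' (hX (ε / 2) (half_pos hε)) fun n => measure_mono fun a ha => ?_
    by_contra h
    simp only [Set.mem_ofPred_eq, not_lt] at h
    exact ha (hεU (Metric.mem_ball.2 (by linarith)))

lemma tendstoInProbability_iff_abs {X : ∀ n, Ω n → ℝ} {c : ℝ} :
    TendstoInProbability P X c ↔
      ∀ ε : ℝ, 0 < ε → Tendsto (fun n => P n {a | ε < |X n a - c|}) atTop (𝓝 0) := by
  simp only [tendstoInProbability_iff_dist, Real.dist_eq]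

end ConvergenceInProbability

section PoolingWeight

variable {ι : Type*} [Fintype ι]

noncomputable def poolingWeight (θ₁ θ₂ : ι → ℝ) (H S₁ S₂ : Matrix ι ι ℝ) : ℝ :=
  (H * S₁).trace / ((θ₁ - θ₂) ⬝ᵥ H *ᵥ (θ₁ - θ₂) + (H * S₁).trace + (H * S₂).trace)

lemma continuousAt_poolingWeight {θ₁ θ₂ : ι → ℝ} {H S₁ S₂ : Matrix ι ι ℝ}
    (h : (θ₁ - θ₂) ⬝ᵥ H *ᵥ (θ₁ - θ₂) + (H * S₁).trace + (H * S₂).trace ≠ 0) :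
    ContinuousAt (fun p : (ι → ℝ) × (ι → ℝ) × Matrix ι ι ℝ × Matrix ι ι ℝ × Matrix ι ι ℝ =>
      poolingWeight p.1 p.2.1 p.2.2.1 p.2.2.2.1 p.2.2.2.2) (θ₁, θ₂, H, S₁, S₂) := by
  unfold poolingWeight
  exact ContinuousAt.div (by fun_prop) (by fun_prop) h

end PoolingWeight

theorem location_adjusted_pooling_weight_tendsto_zero_general
    (d : ℕ) (Ω : ℕ → Type*) [∀ n, MeasurableSpace (Ω n)]
    (P : ∀ n, Measure (Ω n))
    (θbar₁ θbar₂ : ∀ n, Ω n → Fin d → ℝ)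
    (Sbar₁ Sbar₂ Hbar : ∀ n, Ω n → Matrix (Fin d) (Fin d) ℝ)
    (ωtilde : ∀ n, Ω n → ℝ)
    (hωtilde : ∀ n a, ωtilde n a =
      (Hbar n a * Sbar₁ n a).trace /
        ((θbar₁ n a - θbar₂ n a) ⬝ᵥ Hbar n a *ᵥ (θbar₁ n a - θbar₂ n a) +
          (Hbar n a * Sbar₁ n a).trace + (Hbar n a * Sbar₂ n a).trace))
    (θ₀ θstar : Fin d → ℝ)
    (hθ₁ : ∀ ε : ℝ, 0 < ε →
      Tendsto (fun n => P n {a | ε < ‖θbar₁ n a - θ₀‖}) atTop (nhds 0))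
    (hθ₂ : ∀ ε : ℝ, 0 < ε →
      Tendsto (fun n => P n {a | ε < ‖θbar₂ n a - θstar‖}) atTop (nhds 0))
    (Sig₁ Sig₂ : Matrix (Fin d) (Fin d) ℝ)
    (hSig₁ : ∀ i j, ∀ ε : ℝ, 0 < ε →
      Tendsto (fun n => P n {a | ε < |(n : ℝ) * Sbar₁ n a i j - Sig₁ i j|}) atTop (nhds 0))
    (hSig₂ : ∀ i j, ∀ ε : ℝ, 0 < ε →
      Tendsto (fun n => P n {a | ε < |(n : ℝ) * Sbar₂ n a i j - Sig₂ i j|}) atTop (nhds 0))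
    (H₀ : Matrix (Fin d) (Fin d) ℝ)
    (hH : ∀ i j, ∀ ε : ℝ, 0 < ε →
      Tendsto (fun n => P n {a | ε < |Hbar n a i j - H₀ i j|}) atTop (nhds 0))
    (hsep : 0 < (θstar - θ₀) ⬝ᵥ H₀ *ᵥ (θstar - θ₀)) :
    ∀ ε : ℝ, 0 < ε →
      Tendsto (fun n => P n {a | ε < |ωtilde n a|}) atTop (nhds 0) := by
  have hθ₁' : TendstoInProbability P θbar₁ θ₀ :=
    tendstoInProbability_iff_dist.2 (by simpa only [dist_eq_norm] using hθ₁)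
  have hθ₂' : TendstoInProbability P θbar₂ θstar :=
    tendstoInProbability_iff_dist.2 (by simpa only [dist_eq_norm] using hθ₂)
  have hH' : TendstoInProbability P Hbar H₀ :=
    .matrix fun i j => tendstoInProbability_iff_abs.2 (hH i j)
  have hS₁' : TendstoInProbability P Sbar₁ 0 :=
    .of_natCast_smul (c := Sig₁) <| .matrix fun i j => tendstoInProbability_iff_abs.2 (hSig₁ i j)
  have hS₂' : TendstoInProbability P Sbar₂ 0 :=
    .of_natCast_smul (c := Sig₂) <| .matrix fun i j => tendstoInProbability_iff_abs.2 (hSig₂ i j)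
  have hden : (θ₀ - θstar) ⬝ᵥ H₀ *ᵥ (θ₀ - θstar) + (H₀ * 0).trace + (H₀ * 0).trace ≠ 0 := by
    rw [← neg_sub θstar θ₀]
    simpa only [mulVec_neg, dotProduct_neg, neg_dotProduct, neg_neg, mul_zero, trace_zero,
      add_zero] using hsep.ne'
  have hω := (hθ₁'.prodMk (hθ₂'.prodMk (hH'.prodMk (hS₁'.prodMk hS₂')))).comp_continuousAt
    (continuousAt_poolingWeight hden)
  have hω₀ : poolingWeight θ₀ θstar H₀ 0 0 = 0 := by simp [poolingWeight]
  rw [hω₀, tendstoInProbability_iff_abs] at hω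
  simpa only [hωtilde, poolingWeight, sub_zero] using hω

/-- Corollary 1: if the first posterior mean is consistent for `θ₀`, the second is
consistent for a pseudo-true `θ*` with `(θ* - θ₀)ᵀH₀(θ* - θ₀) > 0`, the rescaled posterior
covariance estimates `n·Σ̄ⱼₙ` converge in probability to fixed matrices and `H̄ₙ → H₀` in
probability, then the location-adjusted pooling weight
`ω̃ₙ = tr(H̄ₙΣ̄₁ₙ)/((θ̄₁ₙ-θ̄₂ₙ)ᵀH̄ₙ(θ̄₁ₙ-θ̄₂ₙ) + tr(H̄ₙΣ̄₁ₙ) + tr(H̄ₙΣ̄₂ₙ))` converges to `0`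
in probability. -/
theorem location_adjusted_pooling_weight_tendsto_zero
    (d : ℕ) (Ω : ℕ → Type*) [∀ n, MeasurableSpace (Ω n)]
    (P : ∀ n, Measure (Ω n)) [∀ n, IsProbabilityMeasure (P n)]
    (θbar₁ θbar₂ : ∀ n, Ω n → Fin d → ℝ)
    (Sbar₁ Sbar₂ Hbar : ∀ n, Ω n → Matrix (Fin d) (Fin d) ℝ)
    (ωtilde : ∀ n, Ω n → ℝ)
    (hωtilde : ∀ n a, ωtilde n a =
      (Hbar n a * Sbar₁ n a).trace /
        ((θbar₁ n a - θbar₂ n a) ⬝ᵥ Hbar n a *ᵥ (θbar₁ n a - θbar₂ n a) +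
          (Hbar n a * Sbar₁ n a).trace + (Hbar n a * Sbar₂ n a).trace))
    (θ₀ θstar : Fin d → ℝ)
    (hθ₁ : ∀ ε : ℝ, 0 < ε →
      Tendsto (fun n => P n {a | ε < ‖θbar₁ n a - θ₀‖}) atTop (nhds 0))
    (hθ₂ : ∀ ε : ℝ, 0 < ε →
      Tendsto (fun n => P n {a | ε < ‖θbar₂ n a - θstar‖}) atTop (nhds 0))
    (Sig₁ Sig₂ : Matrix (Fin d) (Fin d) ℝ)
    (hSig₁ : ∀ i j, ∀ ε : ℝ, 0 < ε →
      Tendsto (fun n => P n {a | ε < |(n : ℝ) * Sbar₁ n a i j - Sig₁ i j|}) atTop (nhds 0))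
    (hSig₂ : ∀ i j, ∀ ε : ℝ, 0 < ε →
      Tendsto (fun n => P n {a | ε < |(n : ℝ) * Sbar₂ n a i j - Sig₂ i j|}) atTop (nhds 0))
    (H₀ : Matrix (Fin d) (Fin d) ℝ) (hH₀sym : H₀.IsSymm)
    (hH : ∀ i j, ∀ ε : ℝ, 0 < ε →
      Tendsto (fun n => P n {a | ε < |Hbar n a i j - H₀ i j|}) atTop (nhds 0))
    (hsep : 0 < (θstar - θ₀) ⬝ᵥ H₀ *ᵥ (θstar - θ₀)) :
    ∀ ε : ℝ, 0 < ε →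
      Tendsto (fun n => P n {a | ε < |ωtilde n a|}) atTop (nhds 0) :=
  location_adjusted_pooling_weight_tendsto_zero_general d Ω P θbar₁ θbar₂ Sbar₁ Sbar₂ Hbar ωtilde
    hωtilde θ₀ θstar hθ₁ hθ₂ Sig₁ Sig₂ hSig₁ hSig₂ H₀ hH hsep
end
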